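/- arXiv:1807.05668 — 3 statements merged into one kernel-verified Lean document; each statement's English description precedes it below -/
import Mathlib

section
/- Let k be a commutative ring, C a skeletally small category, and M a locally finite endo-length C-module. Let (X_i)_{i ∈ I} and (Y_i)_{i ∈ I} be families of submodules of M, each of which is a chain under inclusion, such that M = X_i ⊕ Y_i (internal direct sum) for every i ∈ I, and such that for all i, j ∈ I, X_i ⊆ X_j if and only if Y_i ⊇ Y_j. Then M = (⋃_{i ∈ I} X_i) ⊕ (⋂_{i ∈ I} Y_i), where the union and intersection are the pointwise union and intersection of submodules. -/
/-!
At an object `a`, every `X i a` and `Y i a` is stable under `End a`, hence a submodule of the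
finite-length `k[End a]`-module `M a`. So the chain of the `X i a` has a largest member and the
chain of the `Y i a` a smallest one, and because `X i ≤ X j ↔ Y j ≤ Y i` a single index `i₀`
realises both. The union and the intersection at `a` are then `X i₀ a` and `Y i₀ a`, which are
complementary.
-/

open CategoryTheory

universe u v

variable {k : Type u} [CommRing k] {C : Type v} [SmallCategory C]

/-- The representation of the endomorphism monoid `End a` on `M a` induced by a
`C`-module (functor) `M`. -/
@[simps]
noncomputable def endRep (M : C ⥤ ModuleCat.{u} k) (a : C) :
    Representation k (CategoryTheory.End a) (M.obj a) where
  toFun g := (M.map g).hom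
  map_one' := by simp [End.one_def]; rfl
  map_mul' g h := by simp [End.mul_def]; rfl

/-- `M` is locally finite endo-length if each `M a` has finite length as a
module over the monoid algebra `k[End a]`. -/
noncomputable def IsLocallyFiniteEndoLength (M : C ⥤ ModuleCat.{u} k) : Prop :=
  ∀ a : C,
    IsFiniteLength (MonoidAlgebra k (CategoryTheory.End a)) ((endRep M a).asModule)

/-- A submodule (subfunctor) of the `C`-module `M`. -/
structure Subfunctor (M : C ⥤ ModuleCat.{u} k) where
  toFun : ∀ a : C, Submodule k (M.obj a)
  map_mem : ∀ {a b : C} (α : a ⟶ b) {x : M.obj a}, x ∈ toFun a → M.map α x ∈ toFun b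

instance (M : C ⥤ ModuleCat.{u} k) : PartialOrder (Subfunctor M) :=
  PartialOrder.lift Subfunctor.toFun (fun X Y h => by cases X; cases Y; congr)

theorem Directed.exists_forall_le_of_wellFoundedGT {ι α : Type*} [Preorder α] [WellFoundedGT α]
    [Nonempty ι] {f : ι → α} (hf : Directed (· ≤ ·) f) : ∃ i, ∀ j, f j ≤ f i := by
  obtain ⟨_, ⟨i, rfl⟩, hi⟩ :=
    WellFoundedGT.exists_maximal ‹_› (Set.range f) (Set.range_nonempty f)
  exact ⟨i, fun j =>
    (directedOn_range.2 hf).is_top_of_is_max ⟨i, rfl⟩ (fun _ ha => hi ha) _ ⟨j, rfl⟩⟩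

theorem Directed.exists_forall_ge_of_wellFoundedLT {ι α : Type*} [Preorder α] [WellFoundedLT α]
    [Nonempty ι] {f : ι → α} (hf : Directed (· ≥ ·) f) : ∃ i, ∀ j, f i ≤ f j :=
  Directed.exists_forall_le_of_wellFoundedGT (α := αᵒᵈ) hf

namespace Subrepresentation

variable {G V : Type*} [Monoid G] [AddCommGroup V] [Module k V] {ρ : Representation k G V}

instance wellFoundedGT [IsNoetherian (MonoidAlgebra k G) ρ.asModule] :
    WellFoundedGT (Subrepresentation ρ) :=
  have := isNoetherian_iff'.mp ‹_›
  subrepresentationSubmoduleOrderIso.toOrderEmbedding.wellFoundedGT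

instance wellFoundedLT [IsArtinian (MonoidAlgebra k G) ρ.asModule] :
    WellFoundedLT (Subrepresentation ρ) :=
  subrepresentationSubmoduleOrderIso.toOrderEmbedding.wellFoundedLT

end Subrepresentation

namespace Subfunctor

variable {M : C ⥤ ModuleCat.{u} k} {I : Type*} [Nonempty I]

def toSubrepresentation (X : Subfunctor M) (a : C) : Subrepresentation (endRep M a) where
  toSubmodule := X.toFun a
  apply_mem_toSubmodule g _ hx := X.map_mem g hx

theorem toSubrepresentation_mono {X Y : Subfunctor M} (h : X ≤ Y) (a : C) :
    X.toSubrepresentation a ≤ Y.toSubrepresentation a :=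
  h a

theorem exists_forall_toFun_le {X : I → Subfunctor M} (hX : Directed (· ≤ ·) X) (a : C)
    [IsNoetherian (MonoidAlgebra k (End a)) (endRep M a).asModule] :
    ∃ i, ∀ j, (X j).toFun a ≤ (X i).toFun a :=
  (hX.mono_comp _ fun _ _ h => toSubrepresentation_mono h a).exists_forall_le_of_wellFoundedGT

theorem exists_forall_toFun_ge {Y : I → Subfunctor M} (hY : Directed (· ≥ ·) Y) (a : C)
    [IsArtinian (MonoidAlgebra k (End a)) (endRep M a).asModule] :
    ∃ i, ∀ j, (Y i).toFun a ≤ (Y j).toFun a :=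
  (hY.mono_comp _ fun _ _ h => toSubrepresentation_mono h a).exists_forall_ge_of_wellFoundedLT

end Subfunctor

theorem locallyFiniteEndoLength_isCompl_iSup_iInf (M : C ⥤ ModuleCat.{u} k) (hM : IsLocallyFiniteEndoLength M)
    {I : Type*} (X Y : I → Subfunctor M)
    (hXchain : ∀ i j : I, X i ≤ X j ∨ X j ≤ X i)
    (hYchain : ∀ i j : I, Y i ≤ Y j ∨ Y j ≤ Y i)
    (hcompl : ∀ (i : I) (a : C), IsCompl ((X i).toFun a) ((Y i).toFun a))
    (hXY : ∀ i j : I, X i ≤ X j ↔ Y j ≤ Y i) :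
    ∀ a : C, IsCompl (⨆ i : I, (X i).toFun a) (⨅ i : I, (Y i).toFun a) := by
  intro a
  rcases isEmpty_or_nonempty I with _ | _
  · simpa only [iSup_of_empty, iInf_of_empty] using isCompl_bot_top
  obtain ⟨_, _⟩ := isFiniteLength_iff_isNoetherian_isArtinian.mp (hM a)
  have hXdir : Directed (· ≤ ·) X := fun i j =>
    (hXchain i j).elim (fun h => ⟨j, h, le_rfl⟩) (fun h => ⟨i, le_rfl, h⟩)
  have hYdir : Directed (· ≥ ·) Y := fun i j =>
    (hYchain i j).elim (fun h => ⟨i, le_rfl, h⟩) (fun h => ⟨j, h, le_rfl⟩)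
  obtain ⟨i₁, hi₁⟩ := Subfunctor.exists_forall_toFun_le hXdir a
  obtain ⟨i₂, hi₂⟩ := Subfunctor.exists_forall_toFun_ge hYdir a
  obtain ⟨i₀, hX₀, hY₀⟩ : ∃ i₀, (∀ i, (X i).toFun a ≤ (X i₀).toFun a) ∧
      ∀ i, (Y i₀).toFun a ≤ (Y i).toFun a := by
    rcases hXchain i₁ i₂ with h | h
    · exact ⟨i₂, fun i => (hi₁ i).trans (h a), hi₂⟩
    · exact ⟨i₁, hi₁, fun i => ((hXY i₂ i₁).mp h a).trans (hi₂ i)⟩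
  rw [(iSup_le hX₀).antisymm (le_iSup (fun i => (X i).toFun a) i₀),
    (iInf_le (fun i => (Y i).toFun a) i₀).antisymm (le_iInf hY₀)]
  exact hcompl i₀ a
end

section
/- Let k be a commutative ring, C a skeletally small category, and M an indecomposable locally finite endo-length C-module. Then the endomorphism ring End(M) of M in the category of C-modules (i.e., the ring of natural transformations M → M) is a local ring. -/
open CategoryTheory

universe u v

variable {k : Type u} [CommRing k] {C : Type v} [SmallCategory C]

/-- A `C`-module is indecomposable if it is nonzero and it is not the internal
direct sum of two nonzero submodules. -/
def IsIndecomposable (M : C ⥤ ModuleCat.{u} k) : Prop :=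
  (∃ (a : C) (x : M.obj a), x ≠ 0) ∧
    ∀ X Y : Subfunctor M, (∀ a : C, IsCompl (X.toFun a) (Y.toFun a)) →
      (∀ a : C, X.toFun a = ⊥) ∨ (∀ a : C, Y.toFun a = ⊥)

/-!
Fitting's lemma, applied objectwise. For an endomorphism `f` of `M`, each component `f.app a`
is `k[End a]`-linear by naturality, so on the finite-length `k[End a]`-module `M a` it splits
`M a` as the direct sum of its eventual kernel `⋃ₙ ker fⁿ` and its eventual image `⋂ₙ im fⁿ`.
Both are preserved by every `M α`, so they form complementary subfunctors, and indecomposability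
kills one of them at every object. If the eventual kernel vanishes, every `f.app a` is injective,
hence bijective by the Artinian property, and `f` is a unit. If the eventual image vanishes,
every `f.app a` is nilpotent (the images of the powers stabilise), and `1 - f` is a unit.
-/

namespace Module.End

open LinearMap

variable {R V W : Type*} [Semiring R] [AddCommMonoid V] [Module R V] [AddCommMonoid W]
  [Module R W]

theorem map_iSup_ker_pow_le {φ : V →ₗ[R] W} {f : Module.End R V} {g : Module.End R W}
    (h : g ∘ₗ φ = φ ∘ₗ f) : (⨆ n, ker (f ^ n)).map φ ≤ ⨆ n, ker (g ^ n) := by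
  rw [Submodule.map_iSup]
  refine iSup_mono fun n x ⟨y, hy, hyx⟩ => ?_
  rw [← hyx, mem_ker, ← LinearMap.comp_apply, commute_pow_left_of_commute h,
    LinearMap.comp_apply, mem_ker.1 hy, map_zero]

theorem map_iInf_range_pow_le {φ : V →ₗ[R] W} {f : Module.End R V} {g : Module.End R W}
    (h : g ∘ₗ φ = φ ∘ₗ f) : (⨅ n, range (f ^ n)).map φ ≤ ⨅ n, range (g ^ n) :=
  le_iInf fun n => calc
    (⨅ n, range (f ^ n)).map φ ≤ (range (f ^ n)).map φ := Submodule.map_mono (iInf_le _ n)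
    _ = range ((g ^ n) ∘ₗ φ) := by rw [← range_comp, commute_pow_left_of_commute h]
    _ ≤ range (g ^ n) := range_comp_le_range _ _

theorem isNilpotent_of_iInf_range_pow_eq_bot [IsArtinian R V] {f : Module.End R V}
    (h : ⨅ n, range (f ^ n) = ⊥) : IsNilpotent f := by
  obtain ⟨n, hn⟩ := f.eventually_iInf_range_pow_eq.exists
  exact ⟨n, range_eq_bot.1 (hn ▸ h)⟩

end Module.End

section RestrictScalars

open LinearMap

variable {R A V : Type*} [Semiring R] [Semiring A] [AddCommMonoid V] [Module R V] [Module A V]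
  [SMul R A] [IsScalarTower R A V]

theorem LinearMap.restrictScalars_pow (f : Module.End A V) (n : ℕ) :
    (f ^ n).restrictScalars R = f.restrictScalars R ^ n :=
  LinearMap.ext fun x => by
    simp only [restrictScalars_apply, Module.End.pow_apply, coe_restrictScalars]

theorem Submodule.restrictScalars_iSup_ker_pow (f : Module.End A V) :
    (⨆ n, ker (f ^ n)).restrictScalars R = ⨆ n, ker (f.restrictScalars R ^ n) := by
  simp_rw [restrictScalars_iSup, ← LinearMap.restrictScalars_pow, ker_restrictScalars]

theorem Submodule.restrictScalars_iInf_range_pow (f : Module.End A V) :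
    (⨅ n, range (f ^ n)).restrictScalars R = ⨅ n, range (f.restrictScalars R ^ n) := by
  simp_rw [restrictScalars_iInf, ← LinearMap.restrictScalars_pow, range_restrictScalars]

theorem Module.End.isNilpotent_restrictScalars_of_iInf_range_pow_eq_bot [IsArtinian A V]
    {f : Module.End A V} (h : ⨅ n, range (f.restrictScalars R ^ n) = ⊥) :
    IsNilpotent (f.restrictScalars R) := by
  rw [← Submodule.restrictScalars_iInf_range_pow, Submodule.restrictScalars_eq_bot_iff] at h
  obtain ⟨n, hn⟩ := isNilpotent_of_iInf_range_pow_eq_bot h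
  exact ⟨n, by rw [← LinearMap.restrictScalars_pow, hn, restrictScalars_zero]⟩

end RestrictScalars

theorem LinearMap.isCompl_iSup_ker_pow_iInf_range_pow_restrictScalars {R A V : Type*} [Semiring R]
    [Ring A] [AddCommGroup V] [Module R V] [Module A V] [SMul R A] [IsScalarTower R A V]
    [IsNoetherian A V] [IsArtinian A V] (f : Module.End A V) :
    IsCompl (⨆ n, ker (f.restrictScalars R ^ n)) (⨅ n, range (f.restrictScalars R ^ n)) := by
  rw [← Submodule.restrictScalars_iSup_ker_pow, ← Submodule.restrictScalars_iInf_range_pow]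
  exact (isCompl_iSup_ker_pow_iInf_range_pow f).map (Submodule.restrictScalarsLatticeHom R A V)

theorem NatTrans.hom_app_comp_hom_map {M N : C ⥤ ModuleCat.{u} k} (f : M ⟶ N) {a b : C}
    (α : a ⟶ b) : (f.app b).hom ∘ₗ (M.map α).hom = (N.map α).hom ∘ₗ (f.app a).hom := by
  rw [← ModuleCat.hom_comp, ← ModuleCat.hom_comp, f.naturality]

section CModule

open LinearMap

variable {M : C ⥤ ModuleCat.{u} k}

noncomputable def appAsModuleEnd (f : End M) (a : C) :
    Module.End (MonoidAlgebra k (End a)) (endRep M a).asModule :=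
  Representation.IntertwiningMap.equivLinearMapAsModule _ _ <|
    (f.app a).hom.intertwiningMap_of_isIntertwiningMap _ _ fun g x =>
      NatTrans.naturality_apply f g x

noncomputable def Subfunctor.eventualKer (f : End M) : Subfunctor M where
  toFun a := ⨆ n, ker ((f.app a).hom ^ n)
  map_mem α _ hx :=
    Module.End.map_iSup_ker_pow_le (NatTrans.hom_app_comp_hom_map f α)
      (Submodule.mem_map_of_mem hx)

noncomputable def Subfunctor.eventualRange (f : End M) : Subfunctor M where
  toFun a := ⨅ n, range ((f.app a).hom ^ n)
  map_mem α _ hx :=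
    Module.End.map_iInf_range_pow_le (NatTrans.hom_app_comp_hom_map f α)
      (Submodule.mem_map_of_mem hx)

theorem Subfunctor.isCompl_eventualKer_eventualRange (hM : IsLocallyFiniteEndoLength M)
    (f : End M) (a : C) : IsCompl ((eventualKer f).toFun a) ((eventualRange f).toFun a) := by
  obtain ⟨_, _⟩ := isFiniteLength_iff_isNoetherian_isArtinian.mp (hM a)
  exact (appAsModuleEnd f a).isCompl_iSup_ker_pow_iInf_range_pow_restrictScalars (R := k)

theorem bijective_app_of_eventualKer_eq_bot (hM : IsLocallyFiniteEndoLength M) {f : End M}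
    {a : C} (h : (Subfunctor.eventualKer f).toFun a = ⊥) : Function.Bijective (f.app a).hom := by
  have := (isFiniteLength_iff_isNoetherian_isArtinian.mp (hM a)).2
  refine IsArtinian.bijective_of_injective_endomorphism (appAsModuleEnd f a) ?_
  change Function.Injective (f.app a).hom
  rw [← ker_eq_bot, eq_bot_iff, ← h]
  exact le_iSup_of_le 1 (by rw [pow_one])

theorem isNilpotent_app_of_eventualRange_eq_bot (hM : IsLocallyFiniteEndoLength M) {f : End M}
    {a : C} (h : (Subfunctor.eventualRange f).toFun a = ⊥) : IsNilpotent (f.app a).hom := by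
  have := (isFiniteLength_iff_isNoetherian_isArtinian.mp (hM a)).2
  exact Module.End.isNilpotent_restrictScalars_of_iInf_range_pow_eq_bot (R := k)
    (f := appAsModuleEnd f a) h

theorem isUnit_of_isUnit_app {f : End M} (h : ∀ a, IsUnit (f.app a).hom) : IsUnit f := by
  have (a : C) : IsIso (f.app a) := by
    rw [ConcreteCategory.isIso_iff_bijective]
    exact (Module.End.isUnit_iff _).1 (h a)
  exact (isUnit_iff_isIso f).2 (NatIso.isIso_of_isIso_app f)

theorem nontrivial_end_of_ne_zero {a : C} {x : M.obj a} (hx : x ≠ 0) : Nontrivial (End M) :=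
  ⟨1, 0, fun h => hx (congrArg (fun g : End M => g.app a x) h)⟩

end CModule

theorem isLocalRing_end_of_indecomposable (M : C ⥤ ModuleCat.{u} k) (hM : IsLocallyFiniteEndoLength M)
    (hind : IsIndecomposable M) : IsLocalRing (CategoryTheory.End M) := by
  obtain ⟨⟨_, _, hx⟩, hsplit⟩ := hind
  have := nontrivial_end_of_ne_zero hx
  refine .of_isUnit_or_isUnit_one_sub_self fun f => ?_
  rcases hsplit _ _ (Subfunctor.isCompl_eventualKer_eventualRange hM f) with hker | hrange
  · exact .inl <| isUnit_of_isUnit_app fun a =>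
      (Module.End.isUnit_iff _).2 (bijective_app_of_eventualKer_eq_bot hM (hker a))
  · refine .inr <| isUnit_of_isUnit_app fun a => ?_
    rw [NatTrans.app_sub, ModuleCat.hom_sub]
    exact (isNilpotent_app_of_eventualRange_eq_bot hM (hrange a)).isUnit_one_sub
end

section
/- Let k be a field, Q a quiver, and M a representation of Q over k such that the vector space M(a) is finite dimensional for every vertex a of Q. Then there exists a family (M_i)_{i ∈ Λ} of subrepresentations of M such that M is the internal direct sum ⊕_{i ∈ Λ} M_i, each M_i is indecomposable, and the endomorphism ring of each M_i in the category of representations of Q is a local ring. -/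
open CategoryTheory

universe u v w

variable {k : Type u} [Field k] {V : Type v} [Quiver.{w} V]

/-- A subrepresentation of a representation `M` of the quiver `V`,
where `M` is given as a prefunctor into the category of `k`-vector spaces. -/
structure SubRep (M : V ⥤q ModuleCat.{u} k) where
  toFun : ∀ a : V, Submodule k (M.obj a)
  map_mem : ∀ {a b : V} (α : a ⟶ b) {x : M.obj a}, x ∈ toFun a → M.map α x ∈ toFun b

/-- A subrepresentation viewed as a representation in its own right. -/
def SubRep.toRep {M : V ⥤q ModuleCat.{u} k} (N : SubRep M) : V ⥤q ModuleCat.{u} k where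
  obj a := ModuleCat.of k (N.toFun a)
  map α := ModuleCat.ofHom ((M.map α).hom.restrict fun x hx => N.map_mem α hx)

/-- A representation is indecomposable if it is nonzero and is not the internal
direct sum of two nonzero subrepresentations. -/
def IsIndecomposableRep (M : V ⥤q ModuleCat.{u} k) : Prop :=
  (∃ (a : V) (x : M.obj a), x ≠ 0) ∧
    ∀ X Y : SubRep M, (∀ a : V, IsCompl (X.toFun a) (Y.toFun a)) →
      (∀ a : V, X.toFun a = ⊥) ∨ (∀ a : V, Y.toFun a = ⊥)

/-- The endomorphism ring of a representation `M` of a quiver: families of linear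
maps commuting with the structure maps, as a subring of the product of the
endomorphism rings at each vertex. -/
def RepEnd (M : V ⥤q ModuleCat.{u} k) : Subring (∀ a : V, Module.End k (M.obj a)) where
  carrier := { f | ∀ (a b : V) (α : a ⟶ b),
    ((M.map α).hom : M.obj a →ₗ[k] M.obj b).comp (f a) = (f b).comp (M.map α).hom }
  mul_mem' := by
    intro f g hf hg a b α
    ext x
    have h1 := LinearMap.congr_fun (hf a b α) (g a x)
    have h2 := LinearMap.congr_fun (hg a b α) x
    simp only [LinearMap.comp_apply, Pi.mul_apply, Module.End.mul_apply] at *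
    rw [h1, h2]
  one_mem' := by
    intro a b α
    ext x
    simp
  add_mem' := by
    intro f g hf hg a b α
    ext x
    have h1 := LinearMap.congr_fun (hf a b α) x
    have h2 := LinearMap.congr_fun (hg a b α) x
    simp only [LinearMap.comp_apply, Pi.add_apply, LinearMap.add_apply, map_add] at *
    rw [h1, h2]
  zero_mem' := by
    intro a b α
    ext x
    simp
  neg_mem' := by
    intro f hf a b α
    ext x
    have h1 := LinearMap.congr_fun (hf a b α) x
    simp only [LinearMap.comp_apply, Pi.neg_apply, LinearMap.neg_apply, map_neg] at *
    rw [h1]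


/-!
A decomposition of `M` into subrepresentations is a partition of `⊤` in the lattice of families
of subspaces `∀ a, Submodule k (M.obj a)`, ordered by refinement. A chain of
decompositions has a common refinement: at a vertex `j` the number of parts not vanishing at `j` is
bounded by `dim M(j)`, so beyond a member of the chain where it is maximal, the chain no longer
refines anything at `j`. The parts of the common refinement are the meets, along the chain, of the
parts containing a fixed nonzero vector. Zorn's lemma gives a finest decomposition; its parts are
indecomposable, since splitting a part would refine it further, and Fitting's lemma makes the
endomorphism ring of a pointwise finite-dimensional indecomposable representation local.
-/

instance Pi.isModularLattice {ι : Type*} {α : ι → Type*} [∀ i, Lattice (α i)]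
    [∀ i, IsModularLattice (α i)] : IsModularLattice (∀ i, α i) :=
  ⟨fun {_} y {_} h i => IsModularLattice.sup_inf_le_assoc_of_le (y i) (h i)⟩

section Lattice

variable {α : Type*} [CompleteLattice α] {P : Set α} {p x y : α}

theorem sSupIndep.split [IsModularLattice α] (hP : sSupIndep P) (hp : p ∈ P)
    (hxy : Disjoint x y) (hsup : x ⊔ y = p) : sSupIndep (insert x (insert y (P \ {p}))) := by
  have hrest : Disjoint (x ⊔ y) (sSup (P \ {p})) := by rw [hsup]; exact hP hp
  rintro u (rfl | rfl | ⟨huP, hup⟩)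
  · refine (hxy.disjoint_sup_right_of_disjoint_sup_left hrest).mono_right ?_
    rw [← sSup_insert]
    exact sSup_le_sSup (Set.sdiff_singleton_subset_iff.mpr subset_rfl)
  · refine (hxy.symm.disjoint_sup_right_of_disjoint_sup_left
      (sup_comm x u ▸ hrest)).mono_right ?_
    rw [← sSup_insert]
    exact sSup_le_sSup (Set.sdiff_singleton_subset_iff.mpr (Set.insert_comm _ _ _).subset)
  · refine (hP huP).mono_right (sSup_le fun z hz => ?_)
    have hpu : p ∈ P \ {u} := ⟨hp, fun h => hup h.symm⟩
    rcases hz with ⟨rfl | rfl | ⟨hzP, -⟩, hzu⟩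
    · exact le_sSup_of_le hpu (hsup ▸ le_sup_left)
    · exact le_sSup_of_le hpu (hsup ▸ le_sup_right)
    · exact le_sSup ⟨hzP, hzu⟩

theorem sSup_split (hp : p ∈ P) (hsup : x ⊔ y = p) :
    sSup (insert x (insert y (P \ {p}))) = sSup P := by
  rw [sSup_insert, sSup_insert, ← sup_assoc, hsup, ← sSup_insert, Set.insert_sdiff_singleton,
    Set.insert_eq_of_mem hp]

namespace Partition

variable {s : α} {P Q : Partition s}

theorem eq_of_le_of_le {q₁ q₂ r : α} (hq₁ : q₁ ∈ Q) (hq₂ : q₂ ∈ Q) (hr : r ≠ ⊥)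
    (h₁ : r ≤ q₁) (h₂ : r ≤ q₂) : q₁ = q₂ :=
  Q.eq_of_not_disjoint hq₁ hq₂ fun hd => hr (disjoint_self.mp (hd.mono h₁ h₂))

variable [IsModularLattice α]

/-- The part `p = x ⊔ y` is replaced by `x` and `y`; whichever of them is `⊥` is dropped. -/
def split (P : Partition s) (hp : p ∈ P) (hxy : Disjoint x y) (hsup : x ⊔ y = p) :
    Partition s :=
  removeBot _ (P.sSupIndep.split hp hxy hsup) ((sSup_split hp hsup).trans P.sSup_eq)

theorem split_le (hp : p ∈ P) (hxy : Disjoint x y) (hsup : x ⊔ y = p) :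
    P.split hp hxy hsup ≤ P := by
  rintro u ⟨rfl | rfl | ⟨huP, -⟩, -⟩
  · exact ⟨p, hp, hsup ▸ le_sup_left⟩
  · exact ⟨p, hp, hsup ▸ le_sup_right⟩
  · exact ⟨u, huP, le_rfl⟩

theorem split_subset (hp : p ∈ P) (hxy : Disjoint x y) (hsup : x ⊔ y = p) :
    (P.split hp hxy hsup : Set α) ⊆ insert x (insert y P) :=
  fun _ hu => Set.insert_subset_insert (Set.insert_subset_insert Set.sdiff_subset) hu.1

theorem eq_bot_or_eq_bot_of_split_eq (hp : p ∈ P) (hxy : Disjoint x y) (hsup : x ⊔ y = p)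
    (h : P.split hp hxy hsup = P) : x = ⊥ ∨ y = ⊥ := by
  by_contra! hne
  have hxP : x ∈ P := h ▸ ⟨Set.mem_insert x _, hne.1⟩
  have hxp : x = p := P.pairwiseDisjoint.eq_of_le hxP hp hne.1 (hsup ▸ le_sup_left)
  exact hne.2 (hxy.eq_bot_of_ge (hxp ▸ hsup ▸ le_sup_right))

theorem eq_sSup_of_le (h : P ≤ Q) {q : α} (hq : q ∈ Q) : q = sSup {p ∈ P | p ≤ q} := by
  set A := sSup {p ∈ P | p ≤ q}
  set B := sSup {p ∈ P | ¬ p ≤ q}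
  have hA : A ≤ q := sSup_le fun p hp => hp.2
  have hB : Disjoint q B := by
    refine (Q.sSupIndep hq).mono_right (sSup_le fun p ⟨hpP, hpq⟩ => ?_)
    obtain ⟨q', hq', hpq'⟩ := h hpP
    exact le_sSup_of_le ⟨hq', fun hh => hpq (hh ▸ hpq')⟩ hpq'
  have hAB : s ≤ A ⊔ B := by
    rw [← P.sSup_eq]
    refine sSup_le fun p hp => ?_
    by_cases hpq : p ≤ q
    · exact le_sup_of_le_left (le_sSup ⟨hp, hpq⟩)
    · exact le_sup_of_le_right (le_sSup ⟨hp, hpq⟩)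
  calc q = (A ⊔ B) ⊓ q := (inf_eq_right.mpr ((Q.le_of_mem hq).trans hAB)).symm
    _ = A ⊔ B ⊓ q := sup_inf_assoc_of_le B hA
    _ = A := by rw [hB.symm.eq_bot, sup_bot_eq]

end Partition

end Lattice

section Pi

variable {ι ι' : Type*} {α : ι → Type*} [∀ i, CompleteLattice (α i)]

theorem iSupIndep.apply {t : ι' → ∀ i, α i} (ht : iSupIndep t) (i : ι) :
    iSupIndep fun j => t j i := fun j => by
  simpa only [iSup_apply] using Pi.disjoint_iff.mp (ht j) i

namespace Partition

variable {s : ∀ i, α i} {P Q : Partition s} {i : ι}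

theorem iSupIndep_apply (P : Partition s) (i : ι) :
    iSupIndep fun p : (P : Set (∀ i, α i)) => (p : ∀ i, α i) i :=
  ((sSupIndep_iff _).mp P.sSupIndep).apply i

theorem iSup_apply_eq (P : Partition s) (i : ι) :
    ⨆ p : (P : Set (∀ i, α i)), (p : ∀ i, α i) i = s i := by
  rw [← iSup_apply, ← sSup_eq_iSup', P.sSup_eq]

def partsNeBotAt (P : Partition s) (i : ι) : Set (∀ i, α i) := {p ∈ P | p i ≠ ⊥}

theorem exists_mem_partsNeBotAt_le [∀ i, IsModularLattice (α i)] (h : P ≤ Q) {q : ∀ i, α i}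
    (hq : q ∈ Q) (hqi : q i ≠ ⊥) : ∃ p ∈ P.partsNeBotAt i, p ≤ q := by
  by_contra! hP
  refine hqi (eq_bot_iff.mpr ?_)
  rw [eq_sSup_of_le h hq, sSup_apply]
  exact iSup_le fun p => (not_ne_iff.mp fun hpi => hP p ⟨p.2.1, hpi⟩ p.2.2).le

end Partition

end Pi

section Subspaces

variable {ι : Type*} {E : ι → Type*} [∀ i, AddCommGroup (E i)] [∀ i, Module k (E i)]

namespace Partition

variable {P Q : Partition (⊤ : ∀ i, Submodule k (E i))} {i : ι}

theorem eq_of_mem_apply {p q : ∀ i, Submodule k (E i)} (hp : p ∈ P) (hq : q ∈ P) {x : E i}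
    (hx : x ≠ 0) (hxp : x ∈ p i) (hxq : x ∈ q i) : p = q :=
  P.eq_of_not_disjoint hp hq fun hd =>
    hx ((Submodule.disjoint_def.mp (Pi.disjoint_iff.mp hd i)) x hxp hxq)

theorem le_of_le_of_mem_apply (h : P ≤ Q) {p q : ∀ i, Submodule k (E i)} (hp : p ∈ P)
    (hq : q ∈ Q) {x : E i} (hx : x ≠ 0) (hxp : x ∈ p i) (hxq : x ∈ q i) : p ≤ q := by
  obtain ⟨q', hq', hpq'⟩ := h hp
  rwa [eq_of_mem_apply hq hq' hx hxq (hpq' i hxp)]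

variable [FiniteDimensional k (E i)]

theorem finite_partsNeBotAt (P : Partition (⊤ : ∀ i, Submodule k (E i))) :
    (P.partsNeBotAt i).Finite :=
  have := (P.iSupIndep_apply i).fintypeNeBotOfFiniteDimensional
  Finite.of_equiv _ (Equiv.subtypeSubtypeEquivSubtypeInter (· ∈ P) (· i ≠ ⊥))

theorem ncard_partsNeBotAt_le (P : Partition (⊤ : ∀ i, Submodule k (E i))) :
    (P.partsNeBotAt i).ncard ≤ Module.finrank k (E i) := by
  have := (P.iSupIndep_apply i).fintypeNeBotOfFiniteDimensional
  calc (P.partsNeBotAt i).ncard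
      = Nat.card {p : (P : Set (∀ i, Submodule k (E i))) // p.1 i ≠ ⊥} :=
        (Nat.card_congr (Equiv.subtypeSubtypeEquivSubtypeInter (· ∈ P) (· i ≠ ⊥))).symm
    _ ≤ _ := by
      rw [Nat.card_eq_fintype_card]
      exact (P.iSupIndep_apply i).subtype_ne_bot_le_finrank

theorem eq_of_le_of_ncard_partsNeBotAt_le (h : P ≤ Q)
    (hcard : (P.partsNeBotAt i).ncard ≤ (Q.partsNeBotAt i).ncard)
    {q p p' : ∀ i, Submodule k (E i)} (hq : q ∈ Q) (hp : p ∈ P.partsNeBotAt i)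
    (hp' : p' ∈ P.partsNeBotAt i) (hpq : p ≤ q) (hp'q : p' ≤ q) : p = p' := by
  by_contra hne
  have hexists : ∀ r, ∃ r', r ∈ P → r' ∈ Q ∧ r ≤ r' := fun r => by
    by_cases hr : r ∈ P
    · obtain ⟨r', hr', hrr'⟩ := h hr
      exact ⟨r', fun _ => ⟨hr', hrr'⟩⟩
    · exact ⟨r, fun h => absurd h hr⟩
  choose parent hparent using hexists
  have parent_eq : ∀ {r q'}, r ∈ P.partsNeBotAt i → q' ∈ Q → r ≤ q' → parent r = q' :=
    fun hr hq' hrq' => eq_of_le_of_le (hparent _ hr.1).1 hq' (ne_of_apply_ne (· i) hr.2)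
      (hparent _ hr.1).2 hrq'
  -- `q` is already the parent of `p`, so `p'` is not needed to cover `Q.partsNeBotAt i`.
  have hcover : Q.partsNeBotAt i ⊆ parent '' (P.partsNeBotAt i \ {p'}) := by
    rintro q₀ ⟨hq₀, hq₀i⟩
    obtain ⟨c, hc, hcq₀⟩ := exists_mem_partsNeBotAt_le h hq₀ hq₀i
    by_cases hcp' : c = p'
    · subst hcp'
      exact ⟨p, ⟨hp, hne⟩, (parent_eq hp hq hpq).trans
        (eq_of_le_of_le hq hq₀ (ne_of_apply_ne (· i) hc.2) hp'q hcq₀)⟩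
    · exact ⟨c, ⟨hc, hcp'⟩, parent_eq hc hq₀ hcq₀⟩
  have hfin := P.finite_partsNeBotAt (i := i)
  have := (Set.ncard_le_ncard hcover (hfin.sdiff.image parent)).trans
    (Set.ncard_image_le hfin.sdiff)
  have := Set.ncard_sdiff_singleton_lt_of_mem hp' hfin
  omega

theorem apply_eq_of_le_of_ncard_partsNeBotAt_le (h : P ≤ Q)
    (hcard : (P.partsNeBotAt i).ncard ≤ (Q.partsNeBotAt i).ncard) {q p : ∀ i, Submodule k (E i)}
    (hq : q ∈ Q) (hp : p ∈ P.partsNeBotAt i) (hpq : p ≤ q) : p i = q i := by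
  refine le_antisymm (hpq i) ?_
  rw [eq_sSup_of_le h hq, sSup_apply]
  refine iSup_le fun r => ?_
  by_cases hri : (r : ∀ i, Submodule k (E i)) i = ⊥
  · simp [hri]
  · rw [eq_of_le_of_ncard_partsNeBotAt_le h hcard hq ⟨r.2.1, hri⟩ hp r.2.2 hpq]

end Partition

end Subspaces

section Chain

variable {ι : Type*} {E : ι → Type*} [∀ i, AddCommGroup (E i)] [∀ i, Module k (E i)]

namespace Partition

variable (C : Set (Partition (⊤ : ∀ i, Submodule k (E i)))) {i : ι}

def partsContaining (x : E i) : Set (∀ i, Submodule k (E i)) :=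
  {p | ∃ P ∈ C, p ∈ P ∧ x ∈ p i}

def limPart (x : E i) : ∀ i, Submodule k (E i) := sInf (partsContaining C x)

def IsHomogeneous (x : E i) : Prop := ∀ P ∈ C, ∃ p ∈ P, x ∈ p i

def limParts : Set (∀ i, Submodule k (E i)) :=
  {f | ∃ (i : ι) (x : E i), x ≠ 0 ∧ IsHomogeneous C x ∧ limPart C x = f}

/-- The members of a chain `C` finer than a stable `P₀` split no part of `P₀` at `j`. -/
def IsStableAt (P₀ : Partition (⊤ : ∀ i, Submodule k (E i))) (j : ι) : Prop :=
  P₀ ∈ C ∧ ∀ P ∈ C, (P.partsNeBotAt j).ncard ≤ (P₀.partsNeBotAt j).ncard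

variable {C}

theorem mem_limPart_apply (x : E i) : x ∈ limPart C x i := by
  simp only [limPart, sInf_apply, Submodule.mem_iInf]
  exact fun ⟨_, _, _, _, hx⟩ => hx

theorem limPart_le {x : E i} {P} (hP : P ∈ C) {p} (hp : p ∈ P) (hx : x ∈ p i) :
    limPart C x ≤ p :=
  sInf_le ⟨P, hP, hp, hx⟩

variable {j : ι} [FiniteDimensional k (E j)] {P₀ : Partition (⊤ : ∀ i, Submodule k (E i))}
  {p : ∀ i, Submodule k (E i)}

theorem exists_isStableAt (hne : C.Nonempty) : ∃ P₀, IsStableAt C P₀ j := by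
  have hbdd : BddAbove ((fun P : Partition _ => (P.partsNeBotAt j).ncard) '' C) :=
    ⟨Module.finrank k (E j), by rintro _ ⟨P, -, rfl⟩; exact P.ncard_partsNeBotAt_le⟩
  obtain ⟨P₀, hP₀, hmax⟩ := Nat.sSup_mem (hne.image _) hbdd
  exact ⟨P₀, hP₀, fun P hP => (le_csSup hbdd ⟨P, hP, rfl⟩).trans hmax.ge⟩

namespace IsStableAt

variable (hC : IsChain (· ≤ ·) C) (h₀ : IsStableAt C P₀ j)
include hC h₀

theorem isHomogeneous (hp : p ∈ P₀) {x : E j} (hx : x ≠ 0) (hxp : x ∈ p j) :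
    IsHomogeneous C x := by
  intro P hP
  rcases hC.total hP h₀.1 with h | h
  · obtain ⟨c, hc, hcp⟩ :=
      exists_mem_partsNeBotAt_le h hp ((Submodule.ne_bot_iff _).mpr ⟨x, hxp, hx⟩)
    exact ⟨c, hc.1, (apply_eq_of_le_of_ncard_partsNeBotAt_le h (h₀.2 P hP) hp hc hcp) ▸ hxp⟩
  · obtain ⟨q, hq, hpq⟩ := h hp
    exact ⟨q, hq, hpq j hxp⟩

theorem limPart_apply_eq {x : E i} (hx : x ≠ 0) (hp : p ∈ P₀) (hxp : x ∈ p i)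
    (hj : limPart C x j ≠ ⊥) : limPart C x j = p j := by
  refine le_antisymm (limPart_le h₀.1 hp hxp j) ?_
  simp only [limPart, sInf_apply]
  refine le_iInf fun ⟨q, P, hP, hq, hxq⟩ => ?_
  rcases hC.total hP h₀.1 with h | h
  · have hqj : q j ≠ ⊥ := ne_bot_of_le_ne_bot hj (limPart_le hP hq hxq j)
    exact (apply_eq_of_le_of_ncard_partsNeBotAt_le h (h₀.2 P hP) hp ⟨hq, hqj⟩
      (le_of_le_of_mem_apply h hq hp hx hxq hxp)).ge
  · exact le_of_le_of_mem_apply h hp hq hx hxp hxq j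

theorem partsContaining_subset {i' : ι} {x : E i} {y : E i'} (hx : x ≠ 0) (hy : y ≠ 0)
    (hyh : IsHomogeneous C y) (hp : p ∈ P₀) (hxp : x ∈ p i) (hyp : y ∈ p i')
    (hxj : limPart C x j ≠ ⊥) (hyj : limPart C y j ≠ ⊥) :
    partsContaining C x ⊆ partsContaining C y := by
  rintro q ⟨P, hP, hq, hxq⟩
  obtain ⟨q', hq', hyq'⟩ := hyh P hP
  suffices q = q' from ⟨P, hP, hq, this ▸ hyq'⟩
  rcases hC.total hP h₀.1 with h | h
  · exact eq_of_le_of_ncard_partsNeBotAt_le h (h₀.2 P hP) hp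
      ⟨hq, ne_bot_of_le_ne_bot hxj (limPart_le hP hq hxq j)⟩
      ⟨hq', ne_bot_of_le_ne_bot hyj (limPart_le hP hq' hyq' j)⟩
      (le_of_le_of_mem_apply h hq hp hx hxq hxp) (le_of_le_of_mem_apply h hq' hp hy hyq' hyp)
  · exact eq_of_le_of_le hq hq'
      (ne_of_apply_ne (· i) ((Submodule.ne_bot_iff _).mpr ⟨x, hxp, hx⟩))
      (le_of_le_of_mem_apply h hp hq hx hxp hxq) (le_of_le_of_mem_apply h hp hq' hy hyp hyq')

theorem limPart_eq {i' : ι} {x : E i} {y : E i'} (hx : x ≠ 0) (hy : y ≠ 0)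
    (hxh : IsHomogeneous C x) (hyh : IsHomogeneous C y) (hp : p ∈ P₀) (hxp : x ∈ p i)
    (hyp : y ∈ p i') (hxj : limPart C x j ≠ ⊥) (hyj : limPart C y j ≠ ⊥) :
    limPart C x = limPart C y :=
  congrArg sInf ((h₀.partsContaining_subset hC hx hy hyh hp hxp hyp hxj hyj).antisymm
    (h₀.partsContaining_subset hC hy hx hxh hp hyp hxp hyj hxj))

end IsStableAt

end Partition

end Chain

section ChainBound

variable {ι : Type*} {E : ι → Type*} [∀ i, AddCommGroup (E i)] [∀ i, Module k (E i)]
  [∀ i, FiniteDimensional k (E i)] {C : Set (Partition (⊤ : ∀ i, Submodule k (E i)))}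

namespace Partition

theorem sSup_limParts (hC : IsChain (· ≤ ·) C) (hne : C.Nonempty) :
    sSup (limParts C) = ⊤ := by
  funext j
  obtain ⟨P₀, h₀⟩ := exists_isStableAt (j := j) hne
  rw [sSup_apply]
  refine top_le_iff.mp ((P₀.iSup_apply_eq j).ge.trans (iSup_le fun ⟨p, hp⟩ x hxp => ?_))
  by_cases hx : x = 0
  · exact hx ▸ zero_mem _
  exact Submodule.mem_iSup_of_mem ⟨limPart C x, j, x, hx, h₀.isHomogeneous hC hp hx hxp, rfl⟩
    (mem_limPart_apply x)

theorem sSupIndep_limParts (hC : IsChain (· ≤ ·) C) (hne : C.Nonempty) :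
    _root_.sSupIndep (limParts C) := by
  rintro f hf
  refine Pi.disjoint_iff.mpr fun j => ?_
  obtain ⟨P₀, h₀⟩ := exists_isStableAt (j := j) hne
  by_cases hfj : f j = ⊥
  · simp [hfj]
  obtain ⟨i, x, hx, hxh, rfl⟩ := hf
  obtain ⟨p, hp, hxp⟩ := hxh P₀ h₀.1
  rw [h₀.limPart_apply_eq hC hx hp hxp hfj]
  refine (Pi.disjoint_iff.mp (P₀.sSupIndep hp) j).mono_right ?_
  rw [sSup_apply]
  refine iSup_le ?_
  rintro ⟨g, ⟨i', y, hy, hyh, rfl⟩, hgf⟩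
  change limPart C y j ≤ _
  by_cases hgj : limPart C y j = ⊥
  · simp [hgj]
  obtain ⟨p', hp', hyp'⟩ := hyh P₀ h₀.1
  rw [h₀.limPart_apply_eq hC hy hp' hyp' hgj]
  have hp'p : p' ≠ p := by
    rintro rfl
    exact hgf (h₀.limPart_eq hC hy hx hyh hxh hp' hyp' hxp hgj hfj)
  exact le_sSup (s := (P₀ : Set (∀ i, Submodule k (E i))) \ {p}) ⟨hp', hp'p⟩ j

theorem exists_le_of_isChain (hC : IsChain (· ≤ ·) C) (hne : C.Nonempty)
    {Φ : (∀ i, Submodule k (E i)) → Prop} (hΦ : ∀ S, (∀ p ∈ S, Φ p) → Φ (sInf S))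
    (hCΦ : ∀ P ∈ C, ∀ p ∈ P, Φ p) :
    ∃ L : Partition (⊤ : ∀ i, Submodule k (E i)),
      (∀ P ∈ C, L ≤ P) ∧ ∀ f ∈ L, Φ f := by
  refine ⟨⟨limParts C, sSupIndep_limParts hC hne, ?_, sSup_limParts hC hne⟩, ?_, ?_⟩
  · rintro ⟨i, x, hx, -, hbot⟩
    have := mem_limPart_apply (C := C) x
    rw [hbot] at this
    exact hx ((Submodule.mem_bot k).mp this)
  · rintro P hP f ⟨i, x, -, hxh, rfl⟩
    obtain ⟨p, hp, hxp⟩ := hxh P hP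
    exact ⟨p, hp, limPart_le hP hp hxp⟩
  · rintro f ⟨i, x, -, -, rfl⟩
    exact hΦ _ fun p ⟨P, hP, hp, _⟩ => hCΦ P hP p hp

end Partition

end ChainBound

section Decomposition

variable (M : V ⥤q ModuleCat.{u} k)

def IsSubrepFam (p : ∀ a : V, Submodule k (M.obj a)) : Prop :=
  ∀ {a b : V} (α : a ⟶ b) {x : M.obj a}, x ∈ p a → M.map α x ∈ p b

abbrev Decomposition :=
  {P : Partition (⊤ : ∀ a : V, Submodule k (M.obj a)) // ∀ p ∈ P, IsSubrepFam M p}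

variable {M}

theorem IsSubrepFam.sInf {S : Set (∀ a : V, Submodule k (M.obj a))}
    (hS : ∀ p ∈ S, IsSubrepFam M p) : IsSubrepFam M (sInf S) := by
  intro a b α x hx
  simp only [sInf_apply, Submodule.mem_iInf] at hx ⊢
  exact fun p => hS p p.2 α (hx p)

instance : Nonempty (Decomposition M) :=
  ⟨⟨⊤, fun p hp _ _ _ _ _ => by rw [Partition.parts_top_subset hp]; trivial⟩⟩

theorem Decomposition.exists_isMin (hM : ∀ a : V, FiniteDimensional k (M.obj a)) :
    ∃ D : Decomposition M, IsMin D := by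
  obtain ⟨D, hD⟩ := exists_maximal_of_nonempty_chains_bounded (α := Decomposition M)
    (r := (· ≥ ·)) (fun c hc hne => by
      obtain ⟨L, hL, hLsub⟩ := Partition.exists_le_of_isChain
        (hc.symm.image_of_map_rel _ (· ≤ ·) Subtype.val fun _ _ h => h) (hne.image _)
        (fun _ => IsSubrepFam.sInf) (by rintro _ ⟨D, -, rfl⟩; exact D.2)
      exact ⟨⟨L, hLsub⟩, fun D hD => hL D.1 ⟨D, hD, rfl⟩⟩)
    ge_trans
  exact ⟨D, fun D' h => hD D' h⟩

variable (N : SubRep M)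

def SubRep.mapSubtype (X : SubRep N.toRep) : ∀ a : V, Submodule k (M.obj a) :=
  fun a => (X.toFun a).map (N.toFun a).subtype

namespace SubRep

variable {N} {X Y : SubRep N.toRep}

theorem isSubrepFam_mapSubtype : IsSubrepFam M (N.mapSubtype X) := by
  rintro a b α _ ⟨x, hx, rfl⟩
  exact ⟨N.toRep.map α x, X.map_mem α hx, rfl⟩

theorem mapSubtype_eq_bot_iff : N.mapSubtype X = ⊥ ↔ ∀ a, X.toFun a = ⊥ := by
  simp only [funext_iff, mapSubtype, Pi.bot_apply]
  exact forall_congr' fun a => (Submodule.map_injective_of_injective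
    (N.toFun a).injective_subtype).eq_iff' (Submodule.map_bot _)

theorem disjoint_mapSubtype (h : ∀ a, IsCompl (X.toFun a) (Y.toFun a)) :
    Disjoint (N.mapSubtype X) (N.mapSubtype Y) :=
  Pi.disjoint_iff.mpr fun a =>
    Submodule.disjoint_map (N.toFun a).injective_subtype (h a).disjoint

theorem mapSubtype_sup (h : ∀ a, IsCompl (X.toFun a) (Y.toFun a)) :
    N.mapSubtype X ⊔ N.mapSubtype Y = N.toFun :=
  funext fun a => (Submodule.map_sup _ _ _).symm.trans <|
    (congrArg (Submodule.map _) (h a).sup_eq_top).trans (Submodule.map_subtype_top _)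

end SubRep

variable {N}

theorem Decomposition.isIndecomposableRep_of_isMin {D : Decomposition M} (hD : IsMin D)
    (hN : N.toFun ∈ D.1) : IsIndecomposableRep N.toRep := by
  refine ⟨?_, fun X Y hXY => ?_⟩
  · obtain ⟨a, ha⟩ := Function.ne_iff.mp (D.1.ne_bot_of_mem hN)
    obtain ⟨x, hx, hx0⟩ := (Submodule.ne_bot_iff _).mp ha
    exact ⟨a, ⟨x, hx⟩, fun h => hx0 (congrArg Subtype.val h)⟩
  have hdisj := SubRep.disjoint_mapSubtype hXY
  have hsup := SubRep.mapSubtype_sup hXY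
  let Q : Decomposition M := ⟨D.1.split hN hdisj hsup, fun p hp => by
    rcases Partition.split_subset hN hdisj hsup hp with rfl | rfl | hp
    · exact SubRep.isSubrepFam_mapSubtype
    · exact SubRep.isSubrepFam_mapSubtype
    · exact D.2 p hp⟩
  have hQ : Q = D := le_antisymm (Partition.split_le hN hdisj hsup)
    (hD (Partition.split_le hN hdisj hsup))
  simpa only [SubRep.mapSubtype_eq_bot_iff] using
    Partition.eq_bot_or_eq_bot_of_split_eq hN hdisj hsup (congrArg Subtype.val hQ)

end Decomposition

section LocalEnd

variable {N : V ⥤q ModuleCat.{u} k}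

theorem RepEnd.map_apply {f : ∀ a : V, Module.End k (N.obj a)} (hf : f ∈ RepEnd N) {a b : V}
    (α : a ⟶ b) (x : N.obj a) : N.map α (f a x) = f b (N.map α x) :=
  LinearMap.congr_fun (hf a b α) x

theorem RepEnd.isUnit_of_forall_isUnit (f : RepEnd N) (hf : ∀ a, IsUnit (f.1 a)) :
    IsUnit f := by
  let g : ∀ a : V, Module.End k (N.obj a) := fun a => ↑(hf a).unit⁻¹
  have hfg : ∀ a, f.1 a * g a = 1 := fun a => (hf a).mul_val_inv
  have hgf : ∀ a, g a * f.1 a = 1 := fun a => (hf a).val_inv_mul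
  have hg : g ∈ RepEnd N := fun a b α => LinearMap.ext fun x =>
    ((Module.End.isUnit_iff _).mp (hf b)).1 <| by
      simp only [LinearMap.comp_apply, ← Module.End.mul_apply, hfg, ← RepEnd.map_apply f.2,
        Module.End.one_apply]
  exact ⟨⟨f, ⟨g, hg⟩, Subtype.ext (funext hfg), Subtype.ext (funext hgf)⟩, rfl⟩

variable (f : RepEnd N)

def SubRep.iSupKerPow : SubRep N where
  toFun a := ⨆ n, LinearMap.ker (f.1 a ^ n)
  map_mem α x hx := by
    refine Submodule.iSup_induction _ (motive := fun x => N.map α x ∈ _) hx (fun n x hx => ?_)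
      (by simp) (fun x y hx hy => by simpa using add_mem hx hy)
    refine Submodule.mem_iSup_of_mem n (LinearMap.mem_ker.mpr ?_)
    rw [← Pi.pow_apply, ← RepEnd.map_apply (pow_mem f.2 n), Pi.pow_apply,
      LinearMap.mem_ker.mp hx, map_zero]

def SubRep.iInfRangePow : SubRep N where
  toFun a := ⨅ n, LinearMap.range (f.1 a ^ n)
  map_mem α x hx := by
    simp only [Submodule.mem_iInf] at hx ⊢
    intro n
    obtain ⟨y, rfl⟩ := hx n
    exact ⟨N.map α y, by
      rw [← Pi.pow_apply, ← RepEnd.map_apply (pow_mem f.2 n), Pi.pow_apply]⟩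

theorem IsIndecomposableRep.isLocalRing_repEnd [∀ a, FiniteDimensional k (N.obj a)]
    (hN : IsIndecomposableRep N) : IsLocalRing (RepEnd N) := by
  obtain ⟨⟨a₀, x₀, hx₀⟩, hsplit⟩ := hN
  have : Nontrivial (RepEnd N) :=
    ⟨0, 1, fun h => hx₀ (congrArg (fun f : RepEnd N => f.1 a₀ x₀) h).symm⟩
  refine IsLocalRing.of_isUnit_or_isUnit_one_sub_self fun f => ?_
  rcases hsplit (SubRep.iSupKerPow f) (SubRep.iInfRangePow f)
    (fun a => LinearMap.isCompl_iSup_ker_pow_iInf_range_pow _) with hK | hI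
  · refine .inl (RepEnd.isUnit_of_forall_isUnit f fun a =>
      (LinearMap.isUnit_iff_ker_eq_bot _).mpr ?_)
    exact eq_bot_iff.mpr ((le_iSup_of_le 1 (by rw [pow_one])).trans (hK a).le)
  · refine .inr (RepEnd.isUnit_of_forall_isUnit (1 - f) fun a => IsNilpotent.isUnit_one_sub ?_)
    obtain ⟨n, hn⟩ := (f.1 a).eventually_iInf_range_pow_eq.exists
    exact ⟨n, LinearMap.range_eq_bot.mp (hn ▸ hI a)⟩

end LocalEnd

/-- Every pointwise finite-dimensional representation of a quiver over a field is
the internal direct sum of indecomposable subrepresentations with local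
endomorphism rings. -/
theorem quiverRep_directSum_indecomposable_localEnd
    (M : V ⥤q ModuleCat.{u} k) (hM : ∀ a : V, FiniteDimensional k (M.obj a)) :
    ∃ (Λ : Type (max u v)) (Mi : Λ → SubRep M),
      (∀ a : V, iSupIndep (fun i : Λ => (Mi i).toFun a) ∧
        (⨆ i : Λ, (Mi i).toFun a) = ⊤) ∧
      (∀ i : Λ, IsIndecomposableRep (Mi i).toRep) ∧
      (∀ i : Λ, IsLocalRing (RepEnd (Mi i).toRep)) := by
  obtain ⟨D, hD⟩ := Decomposition.exists_isMin hM
  let Mi : D.1 → SubRep M := fun p => ⟨p.1, D.2 p.1 p.2⟩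
  have hind (p : D.1) : IsIndecomposableRep (Mi p).toRep :=
    Decomposition.isIndecomposableRep_of_isMin hD p.2
  refine ⟨D.1, Mi, fun a => ⟨D.1.iSupIndep_apply a, D.1.iSup_apply_eq a⟩, hind, fun p => ?_⟩
  have (a : V) : FiniteDimensional k ((Mi p).toRep.obj a) :=
    inferInstanceAs (FiniteDimensional k (p.1 a))
  exact (hind p).isLocalRing_repEnd
end
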